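/- Let a ∈ ℝ, λ > 1, c > 0, and let T_* = T_*(a,λ,c) be the shock time. Then 1 − c·B(t) > 0 for all t ∈ [0,T_*), the function w(t) = −c / (A(t)·(1 − c·B(t))) satisfies w(0) = −c and the Riccati equation w'(t) = −w(t)² − a·w(t)/(1+t)^λ for all t ∈ [0,T_*), and w(t) → −∞ as t → T_*⁻. (This is the evolution of the slope ∂_x φ along the characteristic of the damped Burgers equation issuing from a point of minimal initial slope −c; the slope blows up exactly at time T_*.) -/

import Mathlib

/-- `A(t) = exp((a/(λ−1))·(1 − (1+t)^(1−λ)))`, i.e. `A(t) = exp(∫₀ᵗ a/(1+s)^λ ds)`. -/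
noncomputable def dampA (a lam t : ℝ) : ℝ :=
  Real.exp (a / (lam - 1) * (1 - (1 + t) ^ (1 - lam)))

/-- `B(t) = ∫₀ᵗ A(s)⁻¹ ds = ∫₀ᵗ exp((a/(λ−1))·((1+s)^(1−λ) − 1)) ds`. -/
noncomputable def dampB (a lam t : ℝ) : ℝ :=
  ∫ s in (0:ℝ)..t, Real.exp (a / (lam - 1) * ((1 + s) ^ (1 - lam) - 1))

/-- The slope `w(t) = −c/(A(t)·(1 − c·B(t)))` along the characteristic issuing from a point
of minimal initial slope `−c`. -/
noncomputable def dampW (a lam c t : ℝ) : ℝ :=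
  -c / (dampA a lam t * (1 - c * dampB a lam t))

/-!
Since `B' = A⁻¹`, the denominator `D = A·(1 − c·B)` of `w = −c/D` solves the linear equation
`D' = (a/(1+t)^λ)·D − c`, and the substitution `w = −c/D` turns it into the Riccati equation.
`B` is strictly increasing, so `D > 0` before the shock time and `D(T_*) = 0`, where `w → −∞`.
-/

open Set Filter Topology MeasureTheory

theorem HasDerivAt.neg_const_div_of_linear {D : ℝ → ℝ} {k c t : ℝ}
    (hD : HasDerivAt D (k * D t - c) t) (hDt : D t ≠ 0) :
    HasDerivAt (fun x => -c / D x) (-(-c / D t) ^ 2 - k * (-c / D t)) t := by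
  refine ((hasDerivAt_const t (-c)).div hD hDt).congr_deriv ?_
  field_simp
  ring

theorem Filter.Tendsto.neg_const_div_atBot {α : Type*} {l : Filter α} {D : α → ℝ} {c : ℝ}
    (hD : Tendsto D l (𝓝[>] 0)) (hc : 0 < c) : Tendsto (fun x => -c / D x) l atBot := by
  simpa only [div_eq_mul_inv, Function.comp_apply] using
    (tendsto_inv_nhdsGT_zero.comp hD).const_mul_atTop_of_neg (neg_neg_of_pos hc)

section Damping

variable {a lam : ℝ}

theorem dampA_pos (a lam t : ℝ) : 0 < dampA a lam t := Real.exp_pos _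

theorem dampA_zero (a lam : ℝ) : dampA a lam 0 = 1 := by
  simp [dampA]

theorem dampB_zero (a lam : ℝ) : dampB a lam 0 = 0 := intervalIntegral.integral_same

theorem dampB_eq_integral_inv_dampA (a lam t : ℝ) :
    dampB a lam t = ∫ s in (0:ℝ)..t, (dampA a lam s)⁻¹ := by
  simp only [dampB, dampA, ← Real.exp_neg, ← mul_neg, neg_sub]

theorem continuousAt_dampA {t : ℝ} (ht : -1 < t) : ContinuousAt (dampA a lam) t := by
  have hbase : 1 + t ≠ 0 := by linarith
  have hpow : ContinuousAt (fun x : ℝ => (1 + x) ^ (1 - lam)) t :=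
    (Real.continuousAt_rpow_const _ _ (Or.inl hbase)).comp (continuousAt_const.add continuousAt_id)
  exact Real.continuous_exp.continuousAt.comp (continuousAt_const.mul (continuousAt_const.sub hpow))

theorem hasDerivAt_dampA (hlam : lam ≠ 1) {t : ℝ} (ht : -1 < t) :
    HasDerivAt (dampA a lam) (a / (1 + t) ^ lam * dampA a lam t) t := by
  have hbase : 0 < 1 + t := by linarith
  have hpow : HasDerivAt (fun x : ℝ => (1 + x) ^ (1 - lam))
      ((1 - lam) * (1 + t) ^ (1 - lam - 1) * 1) t :=
    (Real.hasDerivAt_rpow_const (Or.inl hbase.ne')).comp t ((hasDerivAt_id t).const_add 1)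
  have hexponent : HasDerivAt (fun x : ℝ => a / (lam - 1) * (1 - (1 + x) ^ (1 - lam)))
      (a / (lam - 1) * (0 - (1 - lam) * (1 + t) ^ (1 - lam - 1) * 1)) t :=
    ((hasDerivAt_const t 1).sub hpow).const_mul _
  refine hexponent.exp.congr_deriv ?_
  have hlam' : lam - 1 ≠ 0 := sub_ne_zero.mpr hlam
  rw [show 1 - lam - 1 = -lam by ring, Real.rpow_neg hbase.le, dampA]
  field_simp
  ring

theorem hasDerivAt_dampB {t : ℝ} (ht : -1 < t) :
    HasDerivAt (dampB a lam) (dampA a lam t)⁻¹ t := by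
  have hcont : ∀ s ∈ Ioi (-1 : ℝ), ContinuousAt (fun s => (dampA a lam s)⁻¹) s :=
    fun s hs => (continuousAt_dampA hs).inv₀ (dampA_pos a lam s).ne'
  have hsub : uIcc 0 t ⊆ Ioi (-1 : ℝ) := fun s hs => by
    rcases mem_uIcc.mp hs with h | h <;> simp only [mem_Ioi] <;> linarith [h.1]
  have hint : IntervalIntegrable (fun s => (dampA a lam s)⁻¹) volume 0 t :=
    ContinuousOn.intervalIntegrable fun s hs => (hcont s (hsub hs)).continuousWithinAt
  rw [show dampB a lam = fun t => ∫ s in (0:ℝ)..t, (dampA a lam s)⁻¹ from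
    funext (dampB_eq_integral_inv_dampA a lam)]
  exact intervalIntegral.integral_hasDerivAt_right hint
    (ContinuousAt.stronglyMeasurableAtFilter isOpen_Ioi hcont t ht) (hcont t ht)

theorem strictMonoOn_dampB (a lam : ℝ) : StrictMonoOn (dampB a lam) (Ioi (-1)) := by
  refine strictMonoOn_of_deriv_pos (convex_Ioi _)
    (fun t ht => (hasDerivAt_dampB ht).continuousAt.continuousWithinAt) fun t ht => ?_
  rw [interior_Ioi] at ht
  rw [(hasDerivAt_dampB ht).deriv]
  exact inv_pos.mpr (dampA_pos a lam t)

theorem hasDerivAt_dampA_mul_one_sub (hlam : lam ≠ 1) (c : ℝ) {t : ℝ} (ht : -1 < t) :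
    HasDerivAt (fun x => dampA a lam x * (1 - c * dampB a lam x))
      (a / (1 + t) ^ lam * (dampA a lam t * (1 - c * dampB a lam t)) - c) t := by
  refine ((hasDerivAt_dampA hlam ht).mul (((hasDerivAt_dampB ht).const_mul c).const_sub 1))
    |>.congr_deriv ?_
  have hA := (dampA_pos a lam t).ne'
  field_simp
  ring

variable {c T : ℝ}

theorem one_sub_mul_dampB_pos (hc : 0 < c) (hBT : dampB a lam T = 1 / c) {t : ℝ}
    (ht : t ∈ Ico (0 : ℝ) T) : 0 < 1 - c * dampB a lam t := by
  have hlt : dampB a lam t < dampB a lam T :=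
    strictMonoOn_dampB a lam (by simp only [mem_Ioi]; linarith [ht.1])
      (by simp only [mem_Ioi]; linarith [ht.1, ht.2]) ht.2
  rw [hBT, lt_div_iff₀ hc] at hlt
  linarith

end Damping

theorem stmt7 (a lam c T : ℝ) (hlam : 1 < lam) (hc : 0 < c)
    (hT : 0 < T) (hBT : dampB a lam T = 1 / c) :
    (∀ t ∈ Set.Ico (0 : ℝ) T, 0 < 1 - c * dampB a lam t) ∧
    dampW a lam c 0 = -c ∧
    (∀ t ∈ Set.Ico (0 : ℝ) T,
      HasDerivAt (dampW a lam c)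
        (-(dampW a lam c t) ^ 2 - a * dampW a lam c t / (1 + t) ^ lam) t) ∧
    Filter.Tendsto (dampW a lam c) (nhdsWithin T (Set.Iio T)) Filter.atBot := by
  have hpos := fun t (ht : t ∈ Ico (0 : ℝ) T) => one_sub_mul_dampB_pos hc hBT ht
  have hD := fun t (ht : -1 < t) => hasDerivAt_dampA_mul_one_sub (a := a) hlam.ne' c ht
  refine ⟨hpos, by simp [dampW, dampA_zero, dampB_zero], fun t ht => ?_, ?_⟩
  · have hDt := (mul_pos (dampA_pos a lam t) (hpos t ht)).ne'
    have hW := (hD t (by linarith [ht.1])).neg_const_div_of_linear hDt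
    rwa [div_mul_eq_mul_div] at hW
  · have hDT : dampA a lam T * (1 - c * dampB a lam T) = 0 := by
      rw [hBT, mul_one_div_cancel hc.ne', sub_self, mul_zero]
    refine Tendsto.neg_const_div_atBot (tendsto_nhdsWithin_iff.mpr ⟨?_, ?_⟩) hc
    · exact hDT ▸ (hD T (by linarith)).continuousAt.continuousWithinAt
    · filter_upwards [Ioo_mem_nhdsLT hT] with x hx
      exact mul_pos (dampA_pos a lam x) (hpos x ⟨hx.1.le, hx.2⟩)
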